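/- arXiv:2503.21852 — 2 statements merged into one kernel-verified Lean document; each statement's English description precedes it below -/
import Mathlib

section
/- For natural numbers k, l, m with k ≤ l and l − k ≤ m ≤ l: if every window of m consecutive moves of an infinite move sequence x contains at least l − k moves not satisfying the formula a (i.e., CC_min(l−k, m) holds for ¬a), then every window of l consecutive moves contains at most k moves satisfying a (i.e., CC_max(k,l) holds for a). -/
/-- The window counting constraint CC_max(k,l) for the formula `a`:
every window of `l` consecutive moves contains at most `k` moves satisfying `a`
(`x m' = true` records that move `m'` satisfies `a`). -/
def CCmax (k l : ℕ) (x : ℕ → Bool) : Prop :=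
  ∀ i : ℕ, ((Finset.Ico i (i + l)).filter (fun m' => x m' = true)).card ≤ k

/-- The window counting constraint CC_min(k,l) for the negated formula `¬a`:
every window of `l` consecutive moves contains at least `k` moves not
satisfying `a` (i.e. with `x m' = false`). -/
def CCminNeg (k l : ℕ) (x : ℕ → Bool) : Prop :=
  ∀ i : ℕ, k ≤ ((Finset.Ico i (i + l)).filter (fun m' => x m' = false)).card

theorem Finset.card_filter_true_add_card_filter_false {α : Type*} (s : Finset α)
    (x : α → Bool) :
    (s.filter (fun a => x a = true)).card + (s.filter (fun a => x a = false)).card = s.card := by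
  simpa only [Bool.not_eq_true] using s.card_filter_add_card_filter_not (fun a => x a = true)

theorem CCminNeg.mono_length {k m l : ℕ} {x : ℕ → Bool} (hml : m ≤ l) (h : CCminNeg k m x) :
    CCminNeg k l x := fun i =>
  (h i).trans <| Finset.card_le_card <|
    Finset.filter_subset_filter _ (Finset.Ico_subset_Ico le_rfl (by omega))

theorem ccmax_iff_ccminNeg_sub {k l : ℕ} {x : ℕ → Bool} :
    CCmax k l x ↔ CCminNeg (l - k) l x := by
  refine forall_congr' fun i => ?_
  have hsplit := (Finset.Ico i (i + l)).card_filter_true_add_card_filter_false x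
  rw [Nat.card_Ico, Nat.add_sub_cancel_left] at hsplit
  omega

theorem ccmin_neg_intermediate_implies_ccmax_general (k l m : ℕ) (hhigh : m ≤ l) (x : ℕ → Bool)
    (h : CCminNeg (l - k) m x) : CCmax k l x :=
  ccmax_iff_ccminNeg_sub.mpr (h.mono_length hhigh)

theorem ccmin_neg_intermediate_implies_ccmax (k l m : ℕ) (hkl : k ≤ l)
    (hlow : l - k ≤ m) (hhigh : m ≤ l) (x : ℕ → Bool)
    (h : CCminNeg (l - k) m x) : CCmax k l x :=
  ccmin_neg_intermediate_implies_ccmax_general k l m hhigh x h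
end

section
/- Let w : Fin n → Bool be a finite word and k ≤ l natural numbers. There exists an infinite sequence x : ℕ → Bool extending w (i.e., x m = w m for all m < n) on which the window counting constraint CC_min(k,l) holds, if and only if CC_min(k,l) holds on the particular extension of w that is constantly true from position n onward. -/
/-- The window counting constraint CC_min(k,l): every window of `l`
consecutive moves contains at least `k` moves satisfying the formula. -/
def CCmin (k l : ℕ) (x : ℕ → Bool) : Prop :=
  ∀ i : ℕ, k ≤ ((Finset.Ico i (i + l)).filter (fun m => x m = true)).card

theorem CCmin.mono {k l : ℕ} {x y : ℕ → Bool} (hxy : ∀ m, x m = true → y m = true)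
    (hx : CCmin k l x) : CCmin k l y := fun i =>
  (hx i).trans <| Finset.card_le_card <| Finset.monotone_filter_right _ fun m _ => hxy m

theorem ccmin_prefix_extension_iff_all_true_general (n : ℕ) (w : Fin n → Bool)
    (k l : ℕ) :
    (∃ x : ℕ → Bool, (∀ m : ℕ, (h : m < n) → x m = w ⟨m, h⟩) ∧ CCmin k l x) ↔
      CCmin k l (fun m => if h : m < n then w ⟨m, h⟩ else true) := by
  refine ⟨fun ⟨x, hx, hcc⟩ => hcc.mono fun m hm => ?_, fun hcc => ⟨_, fun m h => dif_pos h, hcc⟩⟩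
  by_cases h : m < n
  · rwa [dif_pos h, ← hx m h]
  · rw [dif_neg h]

theorem ccmin_prefix_extension_iff_all_true (n : ℕ) (w : Fin n → Bool)
    (k l : ℕ) (hkl : k ≤ l) :
    (∃ x : ℕ → Bool, (∀ m : ℕ, (h : m < n) → x m = w ⟨m, h⟩) ∧ CCmin k l x) ↔
      CCmin k l (fun m => if h : m < n then w ⟨m, h⟩ else true) :=
  ccmin_prefix_extension_iff_all_true_general n w k l
end
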